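/- Let Q(λ) = A_4 λ⁴ + A_3 λ³ + A_2 λ² + A_1 λ + A_0 be a random real quartic polynomial whose coefficients A_0, …, A_4 are i.i.d. standard normal random variables. Then the probability r_4 = P(N⁻(Q) = 4) that all four complex roots of Q have negative real part satisfies r_4 < 1/32. -/

import Mathlib

/-!
If every root of a real quartic `a₄λ⁴ + ⋯ + a₀` lies in the open left half-plane, the quartic
factors as `a₄ (λ² + bλ + c) (λ² + dλ + e)` with `b, c, d, e > 0`; comparing coefficients, all `aᵢ`
have the sign of `a₄`, `a₁a₄ < a₂a₃` and `a₀a₃ < a₁a₂`. For i.i.d. symmetric coefficients the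
same-sign event has probability at most `2⁻⁴`, and the coordinate swap `a₁ ↔ a₂, a₃ ↔ a₄`
preserves both the law and that event while exchanging the two sides of `a₁a₄ < a₂a₃`; so the
first two conditions together have probability at most `2⁻⁵`. The open set where they hold but
`a₀a₃ > a₁a₂` has positive Gaussian probability, which makes the bound strict.
-/

open Polynomial MeasureTheory ProbabilityTheory

/-- The number of complex roots, counted with multiplicity, of a real polynomial
that have negative real part. -/
noncomputable def negRootCount (q : Polynomial ℝ) : ℕ :=
  Multiset.card ((q.map (algebraMap ℝ ℂ)).roots.filter fun z => z.re < 0)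

/-- The random real polynomial `∑_{i=0}^{n} ω_i λ^i` built from coefficients `ω`. -/
noncomputable def polyOfCoeffs {n : ℕ} (ω : Fin (n + 1) → ℝ) : Polynomial ℝ :=
  ∑ i : Fin (n + 1), Polynomial.C (ω i) * Polynomial.X ^ (i : ℕ)

open Set
open scoped ENNReal

def IsHurwitzStable (p : ℝ[X]) : Prop := ∀ z : ℂ, aeval z p = 0 → z.re < 0

namespace IsHurwitzStable

variable {p q : ℝ[X]}

lemma ne_zero (hp : IsHurwitzStable p) : p ≠ 0 := by
  rintro rfl
  simpa using hp 0 (aeval_zero 0)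

lemma of_dvd (hp : IsHurwitzStable p) (hqp : q ∣ p) : IsHurwitzStable q := by
  obtain ⟨r, rfl⟩ := hqp
  exact fun z hz => hp z (by rw [map_mul, hz, zero_mul])

lemma exists_quadratic_dvd (hp : IsHurwitzStable p) (hdeg : 2 ≤ p.natDegree) :
    ∃ b c : ℝ, 0 < b ∧ 0 < c ∧ X ^ 2 + C b * X + C c ∣ p := by
  by_cases hnonreal : ∃ z : ℂ, aeval z p = 0 ∧ z.im ≠ 0
  · obtain ⟨z, hz, him⟩ := hnonreal
    have hz0 : z ≠ 0 := by rintro rfl; exact him rfl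
    refine ⟨-(2 * z.re), ‖z‖ ^ 2, by linarith [hp z hz], by positivity, ?_⟩
    convert p.quadratic_dvd_of_aeval_eq_zero_im_ne_zero hz him using 1
    simp only [map_neg, neg_mul, sub_eq_add_neg]
  · push Not at hnonreal
    set R := (p.map (algebraMap ℝ ℂ)).roots
    have hp0 : p.map (algebraMap ℝ ℂ) ≠ 0 := Polynomial.map_ne_zero hp.ne_zero
    have hcard : 2 ≤ Multiset.card R := by
      rwa [← (IsAlgClosed.splits _).natDegree_eq_card_roots, natDegree_map]
    obtain ⟨z, hz⟩ := Multiset.card_pos_iff_exists_mem.1 (show 0 < Multiset.card R by omega)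
    obtain ⟨rest, hrest⟩ := Multiset.exists_cons_of_mem hz
    obtain ⟨w, hw⟩ := Multiset.card_pos_iff_exists_mem.1
      (show 0 < Multiset.card rest by rw [hrest, Multiset.card_cons] at hcard; omega)
    have hle : {z, w} ≤ R := hrest ▸ Multiset.cons_le_cons z (Multiset.singleton_le.2 hw)
    have hreal_root (x : ℂ) (hx : x ∈ ({z, w} : Multiset ℂ)) :
        aeval x p = 0 ∧ (x.re : ℂ) = x := by
      have hx : aeval x p = 0 := by
        rw [aeval_def, ← mem_roots_map hp.ne_zero]
        exact Multiset.mem_of_le hle hx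
      exact ⟨hx, Complex.ext rfl (by simp [hnonreal x hx])⟩
    obtain ⟨hz0, hzr⟩ := hreal_root z (by simp)
    obtain ⟨hw0, hwr⟩ := hreal_root w (by simp)
    refine ⟨-(z.re + w.re), z.re * w.re, by linarith [hp z hz0, hp w hw0],
      mul_pos_of_neg_of_neg (hp z hz0) (hp w hw0), ?_⟩
    have hfac : (X ^ 2 + C (-(z.re + w.re)) * X + C (z.re * w.re) : ℝ[X]) =
        (X - C z.re) * (X - C w.re) := by
      simp only [map_neg, map_add, map_mul]
      ring
    rw [hfac, ← map_dvd_map' (algebraMap ℝ ℂ)]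
    convert (Multiset.prod_X_sub_C_dvd_iff_le_roots hp0 _).2 hle using 1
    simp [hzr, hwr]

lemma exists_eq_C_mul_quadratic_mul_quadratic (hp : IsHurwitzStable p) (hdeg : p.natDegree = 4) :
    ∃ a b c d e : ℝ, a ≠ 0 ∧ 0 < b ∧ 0 < c ∧ 0 < d ∧ 0 < e ∧
      p = C a * ((X ^ 2 + C b * X + C c) * (X ^ 2 + C d * X + C e)) := by
  have monic_quadratic (b c : ℝ) : (X ^ 2 + C b * X + C c).Monic := by monicity!
  have natDegree_quadratic (b c : ℝ) : (X ^ 2 + C b * X + C c).natDegree = 2 := by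
    compute_degree!
  obtain ⟨b, c, hb, hc, r, rfl⟩ := hp.exists_quadratic_dvd (by omega)
  have hr0 : r ≠ 0 := right_ne_zero_of_mul hp.ne_zero
  have hr : r.natDegree = 2 := by
    rw [(monic_quadratic b c).natDegree_mul' hr0, natDegree_quadratic] at hdeg
    omega
  obtain ⟨d, e, hd, he, s, rfl⟩ :=
    (hp.of_dvd (dvd_mul_left r _)).exists_quadratic_dvd hr.ge
  have hs0 : s ≠ 0 := right_ne_zero_of_mul hr0
  have hs : s.natDegree = 0 := by
    rw [(monic_quadratic d e).natDegree_mul' hs0, natDegree_quadratic] at hr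
    omega
  obtain ⟨k, rfl⟩ : ∃ k, s = C k := ⟨_, eq_C_of_natDegree_eq_zero hs⟩
  exact ⟨k, b, c, d, e, C_ne_zero.1 hs0, hb, hc, hd, he, by ring⟩

end IsHurwitzStable

lemma coeff_polyOfCoeffs {n : ℕ} (ω : Fin (n + 1) → ℝ) (i : Fin (n + 1)) :
    (polyOfCoeffs ω).coeff i = ω i := by
  simp only [polyOfCoeffs, finsetSum_coeff, coeff_C_mul_X_pow]
  rw [Finset.sum_eq_single i (fun j _ hji => if_neg (Fin.val_injective.ne hji.symm)) (by simp),
    if_pos rfl]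

lemma natDegree_polyOfCoeffs_le {n : ℕ} (ω : Fin (n + 1) → ℝ) : (polyOfCoeffs ω).natDegree ≤ n :=
  natDegree_sum_le_of_forall_le _ _ fun i _ =>
    (natDegree_C_mul_X_pow_le _ _).trans (Nat.lt_succ_iff.1 i.isLt)

lemma polyOfCoeffs_injective {n : ℕ} : Function.Injective (polyOfCoeffs (n := n)) :=
  fun ω ω' h => funext fun i => by rw [← coeff_polyOfCoeffs ω, h, coeff_polyOfCoeffs]

lemma C_mul_quadratic_mul_quadratic (a b c d e : ℝ) :
    C a * ((X ^ 2 + C b * X + C c) * (X ^ 2 + C d * X + C e)) =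
      polyOfCoeffs (a • ![c * e, b * e + c * d, c + e + b * d, b + d, 1]) := by
  rw [polyOfCoeffs, Fin.sum_univ_five]
  simp only [Pi.smul_apply, smul_eq_mul, Matrix.cons_val, Fin.coe_ofNat_eq_mod, map_mul, map_add,
    map_one]
  ring

theorem IsHurwitzStable.quartic_coeff_ineqs {ω : Fin 5 → ℝ}
    (hp : IsHurwitzStable (polyOfCoeffs ω)) (hdeg : (polyOfCoeffs ω).natDegree = 4) :
    (∀ i j, 0 < ω i * ω j) ∧ ω 1 * ω 4 < ω 2 * ω 3 ∧ ω 0 * ω 3 < ω 1 * ω 2 := by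
  obtain ⟨a, b, c, d, e, ha, hb, hc, hd, he, hfac⟩ :=
    hp.exists_eq_C_mul_quadratic_mul_quadratic hdeg
  rw [C_mul_quadratic_mul_quadratic] at hfac
  obtain rfl := polyOfCoeffs_injective hfac
  have hv : ∀ i, 0 < ![c * e, b * e + c * d, c + e + b * d, b + d, 1] i := by
    simp only [Fin.forall_fin_succ, IsEmpty.forall_iff, Matrix.cons_val_zero, Matrix.cons_val_succ]
    refine ⟨?_, ?_, ?_, ?_, ?_, trivial⟩ <;> positivity
  have ha2 : 0 < a * a := mul_self_pos.2 ha
  refine ⟨fun i j => ?_, ?_, ?_⟩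
  · rw [Pi.smul_apply, Pi.smul_apply, smul_eq_mul, smul_eq_mul, mul_mul_mul_comm]
    exact mul_pos ha2 (mul_pos (hv i) (hv j))
  · simp only [Pi.smul_apply, smul_eq_mul, Fin.isValue, Matrix.cons_val]
    linear_combination mul_pos ha2 (by positivity : 0 < c * b + e * d + b * d * (b + d))
  · simp only [Pi.smul_apply, smul_eq_mul, Fin.isValue, Matrix.cons_val]
    linear_combination mul_pos ha2
      (by positivity : 0 < b * e ^ 2 + b ^ 2 * d * e + c ^ 2 * d + b * c * d ^ 2)

lemma negRootCount_le_natDegree (q : ℝ[X]) : negRootCount q ≤ q.natDegree :=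
  calc negRootCount q ≤ Multiset.card (q.map (algebraMap ℝ ℂ)).roots :=
        Multiset.card_le_card (Multiset.filter_le _ _)
    _ ≤ (q.map (algebraMap ℝ ℂ)).natDegree := card_roots' _
    _ = q.natDegree := natDegree_map _

lemma isHurwitzStable_of_natDegree_le_negRootCount {q : ℝ[X]} (hq : q ≠ 0)
    (h : q.natDegree ≤ negRootCount q) : IsHurwitzStable q := by
  set R := (q.map (algebraMap ℝ ℂ)).roots
  have hfilter : R.filter (fun z => z.re < 0) = R :=
    Multiset.eq_of_le_of_card_le (Multiset.filter_le _ _) <|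
      ((card_roots' _).trans (natDegree_map _).le).trans h
  intro z hz
  have hzR : z ∈ R := by rwa [mem_roots_map hq, ← aeval_def]
  rw [← hfilter] at hzR
  exact (Multiset.mem_filter.1 hzR).2

lemma quartic_coeff_ineqs_of_negRootCount_eq_four {ω : Fin 5 → ℝ}
    (h : negRootCount (polyOfCoeffs ω) = 4) :
    (∀ i j, 0 < ω i * ω j) ∧ ω 1 * ω 4 < ω 2 * ω 3 ∧ ω 0 * ω 3 < ω 1 * ω 2 := by
  have hq0 : polyOfCoeffs ω ≠ 0 := by
    intro h0
    simp [h0, negRootCount] at h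
  have hdeg : (polyOfCoeffs ω).natDegree = 4 :=
    (natDegree_polyOfCoeffs_le ω).antisymm (h.symm.trans_le (negRootCount_le_natDegree _))
  have hstable := isHurwitzStable_of_natDegree_le_negRootCount hq0 (hdeg.trans h.symm).le
  exact hstable.quartic_coeff_ineqs hdeg

lemma MeasureTheory.MeasurePreserving.two_mul_measure_le {α : Type*} [MeasurableSpace α]
    {μ : Measure α} {T : α → α} (hT : MeasurePreserving T μ μ) {s t : Set α}
    (hs : MeasurableSet s) (hdisj : Disjoint s (T ⁻¹' s)) (hst : s ⊆ t) (hTst : T ⁻¹' s ⊆ t) :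
    2 * μ s ≤ μ t :=
  calc 2 * μ s = μ s + μ (T ⁻¹' s) := by rw [hT.measure_preimage hs.nullMeasurableSet, two_mul]
    _ = μ (s ∪ T ⁻¹' s) := (measure_union hdisj (hT.measurable hs)).symm
    _ ≤ μ t := measure_mono (union_subset hst hTst)

section Symmetric

variable {μ : Measure ℝ}

lemma measure_Iio_zero_eq_measure_Ioi_zero (hμ : μ.map Neg.neg = μ) : μ (Iio 0) = μ (Ioi 0) := by
  have hT : MeasurePreserving Neg.neg μ μ := ⟨measurable_neg, hμ⟩
  rw [← hT.measure_preimage measurableSet_Ioi.nullMeasurableSet, neg_preimage, neg_Ioi, neg_zero]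

lemma measure_Ioi_zero_le_inv_two [IsProbabilityMeasure μ] (hμ : μ.map Neg.neg = μ) :
    μ (Ioi 0) ≤ 2⁻¹ := by
  have hT : MeasurePreserving Neg.neg μ μ := ⟨measurable_neg, hμ⟩
  have hdisj : Disjoint (Ioi (0 : ℝ)) (Neg.neg ⁻¹' Ioi 0) := by
    rw [neg_preimage, neg_Ioi, neg_zero]
    exact Ioi_disjoint_Iio_same
  have := hT.two_mul_measure_le measurableSet_Ioi hdisj (subset_univ _) (subset_univ _)
  rwa [measure_univ, mul_comm, ← ENNReal.le_inv_iff_mul_le] at this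

lemma measure_pi_setOf_mul_pos_le [IsProbabilityMeasure μ] (hμ : μ.map Neg.neg = μ)
    (ι : Type*) [Fintype ι] :
    Measure.pi (fun _ : ι => μ) {ω | ∀ i j, 0 < ω i * ω j} ≤ 2 * 2⁻¹ ^ Fintype.card ι := by
  have hsub : {ω : ι → ℝ | ∀ i j, 0 < ω i * ω j} ⊆
      univ.pi (fun _ => Ioi 0) ∪ univ.pi (fun _ => Iio 0) := by
    intro ω hω
    by_cases hpos : ∀ i, 0 < ω i
    · exact Or.inl fun i _ => hpos i
    · push Not at hpos
      obtain ⟨i, hi⟩ := hpos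
      exact Or.inr fun j _ => neg_of_mul_pos_right (hω i j) hi
  calc _ ≤ Measure.pi (fun _ : ι => μ) (univ.pi (fun _ => Ioi 0) ∪ univ.pi (fun _ => Iio 0)) :=
        measure_mono hsub
    _ ≤ μ (Ioi 0) ^ Fintype.card ι + μ (Iio 0) ^ Fintype.card ι := by
        refine (measure_union_le _ _).trans_eq ?_
        simp [Measure.pi_pi]
    _ ≤ 2 * 2⁻¹ ^ Fintype.card ι := by
        rw [measure_Iio_zero_eq_measure_Ioi_zero hμ, ← two_mul]
        gcongr
        exact measure_Ioi_zero_le_inv_two hμ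

end Symmetric

lemma measurePreserving_comp_perm {ι α : Type*} [Fintype ι] [MeasurableSpace α]
    (μ : Measure α) [SigmaFinite μ] (σ : Equiv.Perm ι) :
    MeasurePreserving (fun ω : ι → α => ω ∘ σ) (Measure.pi fun _ => μ) (Measure.pi fun _ => μ) :=
  (measurePreserving_piCongrLeft (fun _ => μ) σ).symm _

lemma measure_pi_setOf_mul_pos_inter_le {μ : Measure ℝ} [IsProbabilityMeasure μ]
    (hμ : μ.map Neg.neg = μ) :
    Measure.pi (fun _ : Fin 5 => μ)
      ({ω | ∀ i j, 0 < ω i * ω j} ∩ {ω | ω 1 * ω 4 < ω 2 * ω 3}) ≤ 32⁻¹ := by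
  set S : Set (Fin 5 → ℝ) := {ω | ∀ i j, 0 < ω i * ω j}
  have hS : MeasurableSet S := by
    simp only [S, ofPred_forall]
    exact .iInter fun i => .iInter fun j => measurableSet_lt measurable_const (by fun_prop)
  have hA : MeasurableSet {ω : Fin 5 → ℝ | ω 1 * ω 4 < ω 2 * ω 3} :=
    measurableSet_lt (by fun_prop) (by fun_prop)
  obtain ⟨τ, hτ1, hτ2, hτ3, hτ4, hττ⟩ : ∃ τ : Equiv.Perm (Fin 5),
      τ 1 = 2 ∧ τ 2 = 1 ∧ τ 3 = 4 ∧ τ 4 = 3 ∧ ∀ i, τ (τ i) = i :=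
    ⟨Equiv.swap 1 2 * Equiv.swap 3 4, by decide⟩
  have h := (measurePreserving_comp_perm μ τ).two_mul_measure_le (hS.inter hA) ?_
    inter_subset_left ?_
  · have := (ENNReal.mul_le_mul_iff_right two_ne_zero ENNReal.ofNat_ne_top).1
      (h.trans (measure_pi_setOf_mul_pos_le hμ (Fin 5)))
    rwa [Fintype.card_fin, ← ENNReal.inv_pow, show (2 : ℝ≥0∞) ^ 5 = 32 by norm_num] at this
  · rw [Set.disjoint_left]
    rintro ω ⟨-, hω⟩ ⟨-, hτω⟩
    change ω (τ 1) * ω (τ 4) < ω (τ 2) * ω (τ 3) at hτω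
    rw [hτ1, hτ2, hτ3, hτ4] at hτω
    exact lt_asymm hω hτω
  · rintro ω ⟨hω, -⟩ i j
    simpa only [Function.comp_apply, hττ] using hω (τ i) (τ j)

/-- For a random real quartic polynomial with i.i.d. standard normal
coefficients, the probability that all four complex roots have negative real part is
strictly smaller than `1/32`. -/
theorem stmt_13 :
    (Measure.pi fun _ : Fin 5 => gaussianReal 0 1)
        {ω | negRootCount (polyOfCoeffs (n := 4) ω) = 4} < 1 / 32 := by
  have hsymm : (gaussianReal 0 1).map Neg.neg = gaussianReal 0 1 := by
    simpa using gaussianReal_map_neg (μ := 0) (v := 1)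
  have : (gaussianReal 0 1).IsOpenPosMeasure :=
    (gaussianReal_absolutelyContinuous' 0 one_ne_zero).isOpenPosMeasure
  set U : Set (Fin 5 → ℝ) := univ.pi (fun _ => Ioi 0) ∩ {ω | ω 1 * ω 4 < ω 2 * ω 3} ∩
    {ω | ω 1 * ω 2 < ω 0 * ω 3}
  have hUopen : IsOpen U :=
    ((isOpen_set_pi finite_univ fun _ _ => isOpen_Ioi).inter
      (isOpen_lt (by fun_prop) (by fun_prop))).inter (isOpen_lt (by fun_prop) (by fun_prop))
  have hU : (Measure.pi fun _ : Fin 5 => gaussianReal 0 1) U ≠ 0 :=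
    hUopen.measure_ne_zero _ ⟨![4, 1, 1, 1, 1 / 2], by
      norm_num [U, Fin.forall_fin_succ, Matrix.cons_val_two, Matrix.cons_val_three,
        Matrix.cons_val_four]⟩
  have hdisj : Disjoint {ω | negRootCount (polyOfCoeffs (n := 4) ω) = 4} U :=
    disjoint_left.2 fun ω hω hωU =>
      (quartic_coeff_ineqs_of_negRootCount_eq_four hω).2.2.not_gt hωU.2
  have hsub : {ω | negRootCount (polyOfCoeffs (n := 4) ω) = 4} ∪ U ⊆
      {ω | ∀ i j, 0 < ω i * ω j} ∩ {ω | ω 1 * ω 4 < ω 2 * ω 3} := by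
    rintro ω (hω | ⟨⟨hpos, hA⟩, -⟩)
    · obtain ⟨hsign, hA, -⟩ := quartic_coeff_ineqs_of_negRootCount_eq_four hω
      exact ⟨hsign, hA⟩
    · exact ⟨fun i j => mul_pos (hpos i trivial) (hpos j trivial), hA⟩
  calc _ < _ + (Measure.pi fun _ : Fin 5 => gaussianReal 0 1) U :=
        ENNReal.lt_add_right (measure_ne_top _ _) hU
    _ = _ := (measure_union hdisj hUopen.measurableSet).symm
    _ ≤ _ := measure_mono hsub
    _ ≤ 32⁻¹ := measure_pi_setOf_mul_pos_inter_le hsymm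
    _ = 1 / 32 := (one_div _).symm
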